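/- Let λ > -1/2 and m ≥ 1. Define the symmetric m×m real matrix A_m by (A_m)_{k,i} = β_k β_i S_{min(k,i)} and the symmetric matrices Ã_m (of size m×m) and Ã_{m+1} (of size (m+1)×(m+1)) by (Ã)_{k,i} = β̃_k β̃_i S̃_{min(k,i)}, where β_k = (Γ(2k+1)(2k+λ)/Γ(2k+2λ))^(1/2), S_k = Γ(2k+2λ+1)/(2(2λ+1)Γ(2k)), β̃_k = (Γ(2k)(2k+λ-1)/Γ(2k+2λ-1))^(1/2), S̃_k = Γ(2k+2λ)/(2(2λ+1)Γ(2k-1)). Then the largest eigenvalues ν̃_m, ν_m, ν̃_{m+1} of Ã_m, A_m, Ã_{m+1} (equivalently, the suprema of the quadratic forms tᵀÃ_m t, tᵀA_m t, tᵀÃ_{m+1} t over unit vectors t) satisfy 0 < ν̃_m < ν_m < ν̃_{m+1}. -/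

import Mathlib

open Matrix

/-- `β_k = (Γ(2k+1)(2k+λ)/Γ(2k+2λ))^{1/2}`. -/
noncomputable def betaCoef (lam : ℝ) (k : ℕ) : ℝ :=
  Real.sqrt (Real.Gamma (2*(k : ℝ) + 1) * (2*(k : ℝ) + lam) / Real.Gamma (2*(k : ℝ) + 2*lam))

/-- `S_k = Γ(2k+2λ+1)/(2(2λ+1)Γ(2k))`. -/
noncomputable def sCoef (lam : ℝ) (k : ℕ) : ℝ :=
  Real.Gamma (2*(k : ℝ) + 2*lam + 1) / (2*(2*lam + 1) * Real.Gamma (2*(k : ℝ)))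

/-- `β̃_k = (Γ(2k)(2k+λ-1)/Γ(2k+2λ-1))^{1/2}`. -/
noncomputable def betatCoef (lam : ℝ) (k : ℕ) : ℝ :=
  Real.sqrt (Real.Gamma (2*(k : ℝ)) * (2*(k : ℝ) + lam - 1) / Real.Gamma (2*(k : ℝ) + 2*lam - 1))

/-- `S̃_k = Γ(2k+2λ)/(2(2λ+1)Γ(2k-1))`. -/
noncomputable def stCoef (lam : ℝ) (k : ℕ) : ℝ :=
  Real.Gamma (2*(k : ℝ) + 2*lam) / (2*(2*lam + 1) * Real.Gamma (2*(k : ℝ) - 1))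

/-- The matrix `A_m`, with `(A_m)_{k,i} = β_k β_i S_{min(k,i)}` (1-based indices). -/
noncomputable def Amat (lam : ℝ) (m : ℕ) : Matrix (Fin m) (Fin m) ℝ :=
  fun k i => betaCoef lam (k.1 + 1) * betaCoef lam (i.1 + 1) *
    sCoef lam (min (k.1 + 1) (i.1 + 1))

/-- The matrix `Ã_m`, with `(Ã_m)_{k,i} = β̃_k β̃_i S̃_{min(k,i)}` (1-based indices). -/
noncomputable def Atmat (lam : ℝ) (m : ℕ) : Matrix (Fin m) (Fin m) ℝ :=
  fun k i => betatCoef lam (k.1 + 1) * betatCoef lam (i.1 + 1) *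
    stCoef lam (min (k.1 + 1) (i.1 + 1))

/-- The largest eigenvalue of a symmetric matrix, as the supremum of its quadratic form
over the unit sphere. -/
noncomputable def maxEig {m : ℕ} (M : Matrix (Fin m) (Fin m) ℝ) : ℝ :=
  sSup {x : ℝ | ∃ t : Fin m → ℝ, (∑ j, (t j)^2) = 1 ∧ x = t ⬝ᵥ M.mulVec t}

/-
All three matrices sample one kernel of a real variable,
`entryFn λ x y = √(betaSq λ x) √(betaSq λ y) sFn λ (min x y)`, where `β_k² = betaSq λ (2k)`,
`β̃_k² = betaSq λ (2k-1)`, `S_k = sFn λ (2k)` and `S̃_k = sFn λ (2k-1)`: the `(k, i)` entries of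
`Ã_m`, `A_m` and of the lower-right `m × m` block of `Ã_{m+1}` are its values at `(2k-1, 2i-1)`,
`(2k, 2i)` and `(2k+1, 2i+1)`. The Gamma recurrence reduces `entryFn λ x y < entryFn λ (x+1) (y+1)`
to a polynomial inequality, so the entries increase strictly along this chain. For matrices with
nonnegative entries, a strict entrywise increase strictly increases the maximum of the quadratic
form (evaluate at `|t|` for a maximiser `t`), and deleting a row and a column can only lower it.
-/

namespace Matrix

variable {n : ℕ}

lemma dotProduct_mulVec_self (M : Matrix (Fin n) (Fin n) ℝ) (t : Fin n → ℝ) :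
    t ⬝ᵥ M *ᵥ t = ∑ k, ∑ i, M k i * (t k * t i) := by
  simp only [dotProduct, mulVec, Finset.mul_sum]
  exact Finset.sum_congr rfl fun k _ => Finset.sum_congr rfl fun i _ => by ring

lemma isCompact_sum_sq_eq_one : IsCompact {t : Fin n → ℝ | ∑ j, t j ^ 2 = 1} := by
  refine (isCompact_univ_pi fun _ => isCompact_Icc (a := (-1 : ℝ)) (b := 1)).of_isClosed_subset
    (isClosed_eq (by fun_prop) continuous_const) fun t ht j _ => ?_
  rw [Set.mem_Icc, ← abs_le, ← sq_le_one_iff_abs_le_one, ← ht.out]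
  exact Finset.single_le_sum (fun i _ => sq_nonneg (t i)) (Finset.mem_univ j)

lemma maxEig_eq_sSup_image (M : Matrix (Fin n) (Fin n) ℝ) :
    maxEig M = sSup ((fun t => t ⬝ᵥ M *ᵥ t) '' {t | ∑ j, t j ^ 2 = 1}) := by
  simp only [maxEig, Set.image, Set.mem_ofPred_eq, eq_comm]

lemma le_maxEig (M : Matrix (Fin n) (Fin n) ℝ) {t : Fin n → ℝ} (ht : ∑ j, t j ^ 2 = 1) :
    t ⬝ᵥ M *ᵥ t ≤ maxEig M := by
  rw [maxEig_eq_sSup_image]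
  exact le_csSup (isCompact_sum_sq_eq_one.image (by fun_prop)).bddAbove ⟨t, ht, rfl⟩

lemma exists_eq_maxEig (M : Matrix (Fin n) (Fin n) ℝ) (hn : 0 < n) :
    ∃ t : Fin n → ℝ, ∑ j, t j ^ 2 = 1 ∧ t ⬝ᵥ M *ᵥ t = maxEig M := by
  rw [maxEig_eq_sSup_image]
  refine (isCompact_sum_sq_eq_one.image (by fun_prop)).sSup_mem ⟨_, Pi.single ⟨0, hn⟩ 1, ?_, rfl⟩
  simp [Pi.single_apply]

lemma diag_le_maxEig (M : Matrix (Fin n) (Fin n) ℝ) (i : Fin n) : M i i ≤ maxEig M := by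
  simpa [mulVec_single_one] using le_maxEig M (t := Pi.single i 1) (by simp [Pi.single_apply])

lemma dotProduct_mulVec_le_abs {M : Matrix (Fin n) (Fin n) ℝ} (hM : ∀ k i, 0 ≤ M k i)
    (t : Fin n → ℝ) : t ⬝ᵥ M *ᵥ t ≤ |t| ⬝ᵥ M *ᵥ |t| := by
  simp only [dotProduct_mulVec_self, Pi.abs_apply, ← abs_mul]
  gcongr with k _ i _
  exacts [hM k i, le_abs_self _]

lemma dotProduct_mulVec_lt_of_lt {M N : Matrix (Fin n) (Fin n) ℝ} (hMN : ∀ k i, M k i < N k i)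
    {t : Fin n → ℝ} (ht : 0 ≤ t) (ht₀ : t ≠ 0) : t ⬝ᵥ M *ᵥ t < t ⬝ᵥ N *ᵥ t := by
  obtain ⟨j, hj⟩ : ∃ j, 0 < t j := by
    by_contra! h
    exact ht₀ (funext fun j => (h j).antisymm (ht j))
  have hterm : ∀ k i, M k i * (t k * t i) ≤ N k i * (t k * t i) := fun k i =>
    mul_le_mul_of_nonneg_right (hMN k i).le (mul_nonneg (ht k) (ht i))
  simp only [dotProduct_mulVec_self]
  refine Finset.sum_lt_sum (fun k _ => Finset.sum_le_sum fun i _ => hterm k i)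
    ⟨j, Finset.mem_univ j, Finset.sum_lt_sum (fun i _ => hterm j i)
      ⟨j, Finset.mem_univ j, mul_lt_mul_of_pos_right (hMN j j) (mul_pos hj hj)⟩⟩

lemma maxEig_lt_maxEig_of_lt {M N : Matrix (Fin n) (Fin n) ℝ} (hn : 0 < n)
    (hM : ∀ k i, 0 ≤ M k i) (hMN : ∀ k i, M k i < N k i) : maxEig M < maxEig N := by
  obtain ⟨t, ht, hmax⟩ := exists_eq_maxEig M hn
  have habs : ∑ j, |t| j ^ 2 = 1 := by simpa only [Pi.abs_apply, sq_abs] using ht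
  have habs₀ : |t| ≠ 0 := fun h => by rw [h] at habs; simp at habs
  calc maxEig M = t ⬝ᵥ M *ᵥ t := hmax.symm
    _ ≤ |t| ⬝ᵥ M *ᵥ |t| := dotProduct_mulVec_le_abs hM t
    _ < |t| ⬝ᵥ N *ᵥ |t| := dotProduct_mulVec_lt_of_lt hMN (abs_nonneg t) habs₀
    _ ≤ maxEig N := le_maxEig N habs

lemma cons_zero_dotProduct_mulVec (N : Matrix (Fin (n + 1)) (Fin (n + 1)) ℝ) (s : Fin n → ℝ) :
    Fin.cons 0 s ⬝ᵥ N *ᵥ Fin.cons 0 s = s ⬝ᵥ N.submatrix Fin.succ Fin.succ *ᵥ s := by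
  simp [dotProduct_mulVec_self, Fin.sum_univ_succ]

lemma maxEig_submatrix_succ_le (N : Matrix (Fin (n + 1)) (Fin (n + 1)) ℝ) (hn : 0 < n) :
    maxEig (N.submatrix Fin.succ Fin.succ) ≤ maxEig N := by
  obtain ⟨s, hs, hmax⟩ := exists_eq_maxEig (N.submatrix Fin.succ Fin.succ) hn
  rw [← hmax, ← cons_zero_dotProduct_mulVec]
  exact le_maxEig N (by simpa [Fin.sum_univ_succ] using hs)

end Matrix

noncomputable def betaSq (lam x : ℝ) : ℝ :=
  Real.Gamma (x + 1) * (x + lam) / Real.Gamma (x + 2 * lam)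

noncomputable def sFn (lam x : ℝ) : ℝ :=
  Real.Gamma (x + 2 * lam + 1) / (2 * (2 * lam + 1) * Real.Gamma x)

noncomputable def betaSqRatio (lam x : ℝ) : ℝ :=
  (x + 1) * (x + lam + 1) / ((x + lam) * (x + 2 * lam))

noncomputable def sRatio (lam x : ℝ) : ℝ := (x + 2 * lam + 1) / x

noncomputable def entryFn (lam x y : ℝ) : ℝ :=
  √(betaSq lam x) * √(betaSq lam y) * sFn lam (min x y)

section Interpolation

variable {lam x y : ℝ}

lemma betaSq_pos (hlam : -1/2 < lam) (hx : 1 ≤ x) : 0 < betaSq lam x := by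
  have := Real.Gamma_pos_of_pos (by linarith : 0 < x + 1)
  have := Real.Gamma_pos_of_pos (by linarith : 0 < x + 2 * lam)
  have : 0 < x + lam := by linarith
  unfold betaSq; positivity

lemma sFn_pos (hlam : -1/2 < lam) (hx : 1 ≤ x) : 0 < sFn lam x := by
  have := Real.Gamma_pos_of_pos (by linarith : 0 < x + 2 * lam + 1)
  have := Real.Gamma_pos_of_pos (by linarith : 0 < x)
  have : 0 < 2 * lam + 1 := by linarith
  unfold sFn; positivity

lemma betaSq_add_one (hlam : -1/2 < lam) (hx : 1 ≤ x) :
    betaSq lam (x + 1) = betaSq lam x * betaSqRatio lam x := by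
  have hΓ := (Real.Gamma_pos_of_pos (by linarith : 0 < x + 2 * lam)).ne'
  have : x + lam ≠ 0 := by linarith
  have : x + 2 * lam ≠ 0 := by linarith
  rw [betaSq, betaSq, betaSqRatio, add_right_comm x 1 (2 * lam), Real.Gamma_add_one this,
    Real.Gamma_add_one (s := x + 1) (by linarith)]
  field_simp
  ring

lemma sFn_add_one (hlam : -1/2 < lam) (hx : 1 ≤ x) :
    sFn lam (x + 1) = sFn lam x * sRatio lam x := by
  have hΓ := (Real.Gamma_pos_of_pos (by linarith : 0 < x)).ne'
  rw [sFn, sFn, sRatio, add_right_comm x 1, add_right_comm (x + 2 * lam) 1,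
    Real.Gamma_add_one (by linarith : x + 2 * lam + 1 ≠ 0),
    Real.Gamma_add_one (s := x) (by linarith)]
  field_simp

lemma one_lt_betaSqRatio_mul_betaSqRatio_mul_sRatio_sq (hlam : -1/2 < lam) (hx : 1 ≤ x)
    (hxy : x ≤ y) : 1 < betaSqRatio lam x * betaSqRatio lam y * sRatio lam x ^ 2 := by
  have hxl : 0 < x + lam := by linarith
  have hx2l : 0 < x + 2 * lam := by linarith
  have hs : 1 ≤ sRatio lam x := (one_le_div (by linarith)).2 (by linarith)
  have hrx : 0 < betaSqRatio lam x := by unfold betaSqRatio; positivity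
  have hrs : 1 < betaSqRatio lam x * sRatio lam x := by
    rw [betaSqRatio, sRatio, div_mul_div_comm, one_lt_div (by positivity)]
    nlinarith [mul_pos hxl hx2l]
  -- For `λ ≤ 1` the ratio at `y` is at least `1`; for `λ ≥ 1` it is increasing in `y`.
  rcases le_total lam 1 with hl | hl
  · have hry : 1 ≤ betaSqRatio lam y := by
      rw [betaSqRatio, one_le_div (by nlinarith)]
      nlinarith
    calc 1 < betaSqRatio lam x * sRatio lam x := hrs
      _ ≤ betaSqRatio lam x * sRatio lam x * (betaSqRatio lam y * sRatio lam x) :=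
        le_mul_of_one_le_right (by positivity) (one_le_mul_of_one_le_of_one_le hry hs)
      _ = betaSqRatio lam x * betaSqRatio lam y * sRatio lam x ^ 2 := by ring
  · have hry : betaSqRatio lam x ≤ betaSqRatio lam y := by
      rw [betaSqRatio, betaSqRatio, div_le_div_iff₀ (by positivity) (by nlinarith)]
      nlinarith [mul_nonneg (mul_nonneg (by linarith : (0 : ℝ) ≤ lam - 1)
        (by linarith : (0 : ℝ) ≤ y - x))
        (by nlinarith : (0:ℝ) ≤ 2 * x * y + (2 * lam + 1) * (x + y) + 2 * lam ^ 2 + 3 * lam)]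
    calc 1 < (betaSqRatio lam x * sRatio lam x) ^ 2 := one_lt_pow₀ hrs two_ne_zero
      _ = betaSqRatio lam x * betaSqRatio lam x * sRatio lam x ^ 2 := by ring
      _ ≤ betaSqRatio lam x * betaSqRatio lam y * sRatio lam x ^ 2 := by gcongr

lemma entryFn_comm (lam x y : ℝ) : entryFn lam x y = entryFn lam y x := by
  rw [entryFn, entryFn, mul_comm √(betaSq lam x), min_comm]

lemma entryFn_pos (hlam : -1/2 < lam) (hx : 1 ≤ x) (hy : 1 ≤ y) : 0 < entryFn lam x y := by
  have := betaSq_pos hlam hx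
  have := betaSq_pos hlam hy
  have := sFn_pos hlam (le_min hx hy)
  unfold entryFn; positivity

lemma entryFn_lt_entryFn_add_one (hlam : -1/2 < lam) (hx : 1 ≤ x) (hy : 1 ≤ y) :
    entryFn lam x y < entryFn lam (x + 1) (y + 1) := by
  wlog hxy : x ≤ y generalizing x y
  · rw [entryFn_comm, entryFn_comm lam (x + 1)]
    exact this hy hx (le_of_not_ge hxy)
  have sqrt_mul_sqrt_mul {a b c : ℝ} (ha : 0 ≤ a) (hc : 0 ≤ c) :
      √a * √b * c = √(a * b * c ^ 2) := by
    rw [Real.sqrt_mul' _ (sq_nonneg c), Real.sqrt_mul ha, Real.sqrt_sq hc]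
  have hx1 : 1 ≤ x + 1 := by linarith
  have hbx := betaSq_pos hlam hx
  have hby := betaSq_pos hlam hy
  have hsx := sFn_pos hlam hx
  rw [entryFn, entryFn, min_eq_left hxy, min_eq_left (by linarith), sqrt_mul_sqrt_mul hbx.le hsx.le,
    sqrt_mul_sqrt_mul (betaSq_pos hlam hx1).le (sFn_pos hlam hx1).le]
  refine Real.sqrt_lt_sqrt (by positivity) ?_
  rw [betaSq_add_one hlam hx, betaSq_add_one hlam hy, sFn_add_one hlam hx]
  have key := one_lt_betaSqRatio_mul_betaSqRatio_mul_sRatio_sq hlam hx hxy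
  calc betaSq lam x * betaSq lam y * sFn lam x ^ 2
      < betaSq lam x * betaSq lam y * sFn lam x ^ 2 * _ :=
        lt_mul_of_one_lt_right (by positivity) key
    _ = _ := by ring

end Interpolation

lemma betaCoef_eq_sqrt (lam : ℝ) (k : ℕ) : betaCoef lam k = √(betaSq lam (2 * k)) := rfl

lemma betatCoef_eq_sqrt (lam : ℝ) (k : ℕ) : betatCoef lam k = √(betaSq lam (2 * k - 1)) := by
  rw [betatCoef, betaSq]; ring_nf

lemma sCoef_eq (lam : ℝ) (k : ℕ) : sCoef lam k = sFn lam (2 * k) := rfl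

lemma stCoef_eq (lam : ℝ) (k : ℕ) : stCoef lam k = sFn lam (2 * k - 1) := by
  rw [stCoef, sFn]; ring_nf

lemma Amat_apply (lam : ℝ) {m : ℕ} (k i : Fin m) :
    Amat lam m k i = entryFn lam (2 * (k + 1)) (2 * (i + 1)) := by
  have hmono : Monotone fun p : ℕ => 2 * (p : ℝ) := fun a b h => by simp only; gcongr
  rw [Amat, entryFn, betaCoef_eq_sqrt, betaCoef_eq_sqrt, sCoef_eq, hmono.map_min]
  push_cast; rfl

lemma Atmat_apply (lam : ℝ) {m : ℕ} (k i : Fin m) :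
    Atmat lam m k i = entryFn lam (2 * (k + 1) - 1) (2 * (i + 1) - 1) := by
  have hmono : Monotone fun p : ℕ => 2 * (p : ℝ) - 1 := fun a b h => by simp only; gcongr
  rw [Atmat, entryFn, betatCoef_eq_sqrt, betatCoef_eq_sqrt, stCoef_eq, hmono.map_min]
  push_cast; rfl

section Entries

variable {lam : ℝ} {m : ℕ}

lemma one_le_two_mul_succ_sub_one (k : ℕ) : (1 : ℝ) ≤ 2 * (k + 1) - 1 := by
  have : (0 : ℝ) ≤ k := k.cast_nonneg
  linarith

lemma Atmat_pos (hlam : -1/2 < lam) (k i : Fin m) : 0 < Atmat lam m k i := by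
  rw [Atmat_apply]
  exact entryFn_pos hlam (one_le_two_mul_succ_sub_one k) (one_le_two_mul_succ_sub_one i)

lemma Amat_pos (hlam : -1/2 < lam) (k i : Fin m) : 0 < Amat lam m k i := by
  rw [Amat_apply]
  exact entryFn_pos hlam (by linarith [one_le_two_mul_succ_sub_one k])
    (by linarith [one_le_two_mul_succ_sub_one i])

lemma Atmat_lt_Amat (hlam : -1/2 < lam) (k i : Fin m) : Atmat lam m k i < Amat lam m k i := by
  rw [Atmat_apply, Amat_apply]
  simpa only [sub_add_cancel] using entryFn_lt_entryFn_add_one hlam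
    (one_le_two_mul_succ_sub_one k) (one_le_two_mul_succ_sub_one i)

lemma Amat_lt_Atmat_succ (hlam : -1/2 < lam) (k i : Fin m) :
    Amat lam m k i < (Atmat lam (m + 1)).submatrix Fin.succ Fin.succ k i := by
  rw [submatrix_apply, Atmat_apply, Amat_apply]
  convert entryFn_lt_entryFn_add_one hlam (x := 2 * (k + 1)) (y := 2 * (i + 1))
    (by linarith [one_le_two_mul_succ_sub_one k]) (by linarith [one_le_two_mul_succ_sub_one i])
    using 2 <;> simp only [Fin.val_succ] <;> push_cast <;> ring

end Entries

/-- Lemma 3.1: `0 < ν̃_m < ν_m < ν̃_{m+1}`. -/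
theorem maxEig_inequalities (lam : ℝ) (hlam : lam > -1/2) (m : ℕ) (hm : 1 ≤ m) :
    0 < maxEig (Atmat lam m) ∧ maxEig (Atmat lam m) < maxEig (Amat lam m) ∧
      maxEig (Amat lam m) < maxEig (Atmat lam (m+1)) :=
  ⟨(Atmat_pos hlam _ _).trans_le (diag_le_maxEig _ ⟨0, hm⟩),
    maxEig_lt_maxEig_of_lt hm (fun k i => (Atmat_pos hlam k i).le) (Atmat_lt_Amat hlam),
    calc maxEig (Amat lam m)
        < maxEig ((Atmat lam (m + 1)).submatrix Fin.succ Fin.succ) :=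
          maxEig_lt_maxEig_of_lt hm (fun k i => (Amat_pos hlam k i).le) (Amat_lt_Atmat_succ hlam)
      _ ≤ maxEig (Atmat lam (m + 1)) := maxEig_submatrix_succ_le _ hm⟩
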